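/- Let H be a real Hadamard matrix of order 8. Then the determinant of every 6×6 submatrix of H (obtained by selecting any 6 rows and any 6 columns) has absolute value equal to 0 or 128. In particular, no 6×6 matrix with entries ±1 whose determinant has absolute value 160 = 5·2⁵ (the maximal determinant of a 6×6 ±1 matrix) occurs as a submatrix of an 8×8 real Hadamard matrix. -/
import Mathlib

open Matrix

/-- `H` is a real Hadamard matrix of order `n`: `±1` entries with `H Hᵀ = n I`. -/
def IsRealHadamard {n : ℕ} (H : Matrix (Fin n) (Fin n) ℝ) : Prop :=
  (∀ i j, H i j = 1 ∨ H i j = -1) ∧ H * H.transpose = (n : ℝ) • 1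

lemma sum_orderIsoOfFin {n k : ℕ} (S : Finset (Fin n)) (h : S.card = k) (g : Fin n → ℝ) :
    ∑ b : Fin k, g (S.orderIsoOfFin h b) = ∑ x ∈ S, g x := by
  rw [← Finset.sum_coe_sort S g]
  exact Fintype.sum_equiv (S.orderIsoOfFin h).toEquiv _ _ (fun b => rfl)

lemma pm_sum_sq (t e1 e2 e3 e4 : ℝ) (h1 : e1 = 1 ∨ e1 = -1) (h2 : e2 = 1 ∨ e2 = -1)
    (h3 : e3 = 1 ∨ e3 = -1) (h4 : e4 = 1 ∨ e4 = -1)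
    (h0 : t + (e1 * e2 + e3 * e4) = 0) : t * t = 0 ∨ t * t = 4 := by
  rcases h1 with h1 | h1 <;> rcases h2 with h2 | h2 <;> rcases h3 with h3 | h3 <;>
    rcases h4 with h4 | h4 <;> rw [h1, h2, h3, h4] at h0 <;>
    first
      | (left; nlinarith)
      | (right; nlinarith)

set_option maxHeartbeats 1000000 in
theorem stmt16 (H : Matrix (Fin 8) (Fin 8) ℝ) (hH : IsRealHadamard H)
    (S T : Finset (Fin 8)) (hS : S.card = 6) (hT : T.card = 6) :
    |Matrix.det (H.submatrix
        (fun a => (S.orderIsoOfFin hS a : Fin 8))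
        (fun b => (T.orderIsoOfFin hT b : Fin 8)))| = 0 ∨
    |Matrix.det (H.submatrix
        (fun a => (S.orderIsoOfFin hS a : Fin 8))
        (fun b => (T.orderIsoOfFin hT b : Fin 8)))| = 128 := by
  obtain ⟨hpm, hHH⟩ := hH
  have hHH' : H * H.transpose = (8 : ℝ) • 1 := by
    rw [hHH]; norm_num
  -- columns are also orthogonal
  have hHtH : H.transpose * H = (8 : ℝ) • 1 := by
    have h1 : H * ((8 : ℝ)⁻¹ • H.transpose) = 1 := by
      rw [Matrix.mul_smul, hHH', smul_smul]; norm_num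
    have h2 : ((8 : ℝ)⁻¹ • H.transpose) * H = 1 := mul_eq_one_comm.mp h1
    calc H.transpose * H = (8 : ℝ) • (((8 : ℝ)⁻¹ • H.transpose) * H) := by
          rw [Matrix.smul_mul, smul_smul]; norm_num
      _ = (8 : ℝ) • 1 := by rw [h2]
  have hsq : ∀ i j, H i j * H i j = 1 := by
    intro i j; rcases hpm i j with h | h <;> rw [h] <;> norm_num
  set r : Fin 6 → Fin 8 := fun a => (S.orderIsoOfFin hS a : Fin 8) with hr
  set c : Fin 6 → Fin 8 := fun b => (T.orderIsoOfFin hT b : Fin 8) with hc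
  have hTc : Tᶜ.card = 2 := by
    rw [Finset.card_compl, hT]; rfl
  have hSc : Sᶜ.card = 2 := by
    rw [Finset.card_compl, hS]; rfl
  set c' : Fin 2 → Fin 8 := fun b => (Tᶜ.orderIsoOfFin hTc b : Fin 8) with hc'
  set A := H.submatrix r c with hA
  set C := H.submatrix r c' with hC
  have hrinj : Function.Injective r := fun a b h =>
    (S.orderIsoOfFin hS).injective (Subtype.ext h)
  have hrmem : ∀ a, r a ∈ S := fun a => (S.orderIsoOfFin hS a).2
  have hcmem : ∀ b, c' b ∈ Tᶜ := fun b => (Tᶜ.orderIsoOfFin hTc b).2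
  -- Step 1 : A * Aᵀ + C * Cᵀ = 8 • 1
  have key1 : A * A.transpose + C * C.transpose = (8 : ℝ) • 1 := by
    ext i j
    have e1 : ∑ b : Fin 6, H (r i) (c b) * H (r j) (c b)
        = ∑ x ∈ T, H (r i) x * H (r j) x :=
      sum_orderIsoOfFin T hT (fun x => H (r i) x * H (r j) x)
    have e2 : ∑ b : Fin 2, H (r i) (c' b) * H (r j) (c' b)
        = ∑ x ∈ Tᶜ, H (r i) x * H (r j) x :=
      sum_orderIsoOfFin Tᶜ hTc (fun x => H (r i) x * H (r j) x)
    have e3 : (∑ x ∈ T, H (r i) x * H (r j) x) + ∑ x ∈ Tᶜ, H (r i) x * H (r j) x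
        = ∑ x : Fin 8, H (r i) x * H (r j) x := Finset.sum_add_sum_compl T _
    have e4 : ∑ x : Fin 8, H (r i) x * H (r j) x = ((8 : ℝ) • (1 : Matrix (Fin 8) (Fin 8) ℝ)) (r i) (r j) := by
      rw [← hHH']
      simp [Matrix.mul_apply]
    simp only [Matrix.add_apply, Matrix.mul_apply, hA, hC, Matrix.submatrix_apply,
      Matrix.transpose_apply, Matrix.smul_apply, Matrix.one_apply]
    rw [e1, e2, e3, e4]
    simp only [Matrix.smul_apply, Matrix.one_apply]
    by_cases h : i = j
    · simp [h]
    · have : r i ≠ r j := fun hr' => h (hrinj hr')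
      simp [h, this]
  have key1' : A * A.transpose = (8 : ℝ) • 1 - C * C.transpose :=
    eq_sub_of_add_eq key1
  -- Step 2 : reduce determinant via Weinstein–Aronszajn
  have hdet6 : ((8 : ℝ) • (1 : Matrix (Fin 6) (Fin 6) ℝ) - C * C.transpose).det
      = (8 : ℝ)^4 * ((8 : ℝ) • (1 : Matrix (Fin 2) (Fin 2) ℝ) - C.transpose * C).det := by
    have f1 : (8 : ℝ) • (1 : Matrix (Fin 6) (Fin 6) ℝ) - C * C.transpose
        = (8 : ℝ) • (1 - ((8 : ℝ)⁻¹ • C) * C.transpose) := by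
      rw [Matrix.smul_mul]
      rw [smul_sub, smul_smul]
      norm_num
    have f2 : (8 : ℝ) • (1 : Matrix (Fin 2) (Fin 2) ℝ) - C.transpose * C
        = (8 : ℝ) • (1 - C.transpose * ((8 : ℝ)⁻¹ • C)) := by
      rw [Matrix.mul_smul]
      rw [smul_sub, smul_smul]
      norm_num
    rw [f1, f2, Matrix.det_smul, Matrix.det_smul,
      Matrix.det_one_sub_mul_comm (((8 : ℝ)⁻¹ • C)) C.transpose]
    simp [Fintype.card_fin]
    ring
  -- Step 3 : compute the 2×2 determinant
  set t : ℝ := ∑ a : Fin 6, H (r a) (c' 0) * H (r a) (c' 1) with ht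
  have hdiag : ∀ k : Fin 2, ∑ a : Fin 6, H (r a) (c' k) * H (r a) (c' k) = 6 := by
    intro k
    rw [Finset.sum_congr rfl (fun a _ => hsq (r a) (c' k))]
    simp
  have hdet2 : ((8 : ℝ) • (1 : Matrix (Fin 2) (Fin 2) ℝ) - C.transpose * C).det
      = 4 - t * t := by
    rw [Matrix.det_fin_two]
    simp only [Matrix.sub_apply, Matrix.smul_apply, Matrix.one_apply, Matrix.mul_apply,
      Matrix.transpose_apply, hC, Matrix.submatrix_apply]
    have h00 := hdiag 0
    have h11 := hdiag 1
    have h10 : ∑ a : Fin 6, H (r a) (c' 1) * H (r a) (c' 0) = t := by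
      rw [ht]; exact Finset.sum_congr rfl (fun a _ => mul_comm _ _)
    rw [h00, h11, h10, ht]
    norm_num
  -- Step 4 : t ∈ {-2, 0, 2}
  have hc'inj : c' 0 ≠ c' 1 := by
    intro h
    have := (Tᶜ.orderIsoOfFin hTc).injective (Subtype.ext h)
    simp at this
  have htot : ∑ x : Fin 8, H x (c' 0) * H x (c' 1) = 0 := by
    have := congrFun (congrFun hHtH (c' 0)) (c' 1)
    simp only [Matrix.mul_apply, Matrix.transpose_apply, Matrix.smul_apply,
      Matrix.one_apply, hc'inj] at this
    simpa [hc'inj] using this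
  have hsplit : t + ∑ x ∈ Sᶜ, H x (c' 0) * H x (c' 1) = 0 := by
    rw [ht]
    rw [sum_orderIsoOfFin S hS (fun x => H x (c' 0) * H x (c' 1))]
    rw [Finset.sum_add_sum_compl S _, htot]
  set u : Fin 2 → Fin 8 := fun b => (Sᶜ.orderIsoOfFin hSc b : Fin 8) with hu
  have hcompl : ∑ x ∈ Sᶜ, H x (c' 0) * H x (c' 1)
      = H (u 0) (c' 0) * H (u 0) (c' 1) + H (u 1) (c' 0) * H (u 1) (c' 1) := by
    rw [← sum_orderIsoOfFin Sᶜ hSc (fun x => H x (c' 0) * H x (c' 1))]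
    rw [Fin.sum_univ_two]
  have ht2 : t * t = 0 ∨ t * t = 4 := by
    have h0 := hsplit
    rw [hcompl] at h0
    exact pm_sum_sq t _ _ _ _ (hpm (u 0) (c' 0)) (hpm (u 0) (c' 1))
      (hpm (u 1) (c' 0)) (hpm (u 1) (c' 1)) h0
  -- Step 5 : conclude
  have hdetA : A.det ^ 2 = (8 : ℝ)^4 * (4 - t * t) := by
    have : A.det ^ 2 = (A * A.transpose).det := by
      rw [Matrix.det_mul, Matrix.det_transpose]; ring
    rw [this, key1', hdet6, hdet2]
  rcases ht2 with h | h
  · right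
    rw [h] at hdetA
    have h128 : A.det ^ 2 = 128 ^ 2 := by rw [hdetA]; norm_num
    have habs : |A.det| = 128 := by
      have h1 : (|A.det| - 128) * (|A.det| + 128) = 0 := by
        nlinarith [sq_abs A.det, abs_nonneg A.det]
      rcases mul_eq_zero.mp h1 with h2 | h2
      · linarith
      · nlinarith [abs_nonneg A.det]
    exact habs
  · left
    rw [h] at hdetA
    have h0 : A.det = 0 := by nlinarith
    rw [h0, abs_zero]
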